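/- Let K, L > 0 and 0 ≤ v < 1, and define f(ω) = arctanh( K v / (L ω) ) for |ω| > K v / L. Then for every integer m ≥ 0 and every real ω with |ω| ≥ √2·K/L, |f^{(m)}(ω)| ≤ (6L/K)^m · m!. -/

import Mathlib

/-!
With `c = Kv/L` we have `0 ≤ c < K/L` and `f(ω) = arctanh (c/ω) = ½ (log (ω + c) - log (ω - c))`
near every `ω` with `|ω| > c`, so
`f⁽ⁿ⁺¹⁾(ω) = (-1)ⁿ n! / 2 · ((ω + c)^{-(n+1)} - (ω - c)^{-(n+1)})`.
For `|ω| ≥ √2 K/L ≥ 4K/(3L)` both `|ω ± c| ≥ K/(3L)`, which gives `|f⁽ⁿ⁺¹⁾(ω)| ≤ n! (3L/K)ⁿ⁺¹`.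
For `m = 0`, `|c/ω| ≤ 3/4` and `arctanh (3/4) = ½ log 7 < 1`.
-/

open Real

noncomputable def arctanh (x : ℝ) : ℝ := (1 / 2) * Real.log ((1 + x) / (1 - x))

open Nat in
theorem Real.iteratedDeriv_succ_log (n : ℕ) (x : ℝ) :
    iteratedDeriv (n + 1) log x = (-1) ^ n * n ! / x ^ (n + 1) := by
  rw [iteratedDeriv_succ', deriv_log', iteratedDeriv_eq_iterate, iter_deriv_inv,
    show (-1 - n : ℤ) = -((n + 1 : ℕ) : ℤ) by push_cast; ring, zpow_neg, zpow_natCast, div_eq_mul_inv]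

/-- Since `Real.log` is `log |·|`, this also holds for `y < 0`, and at `y = 0` both sides vanish. -/
theorem arctanh_div_eq_log_sub {c y : ℝ} (hp : y + c ≠ 0) (hm : y - c ≠ 0) :
    arctanh (c / y) = 1 / 2 * (log (y + c) - log (y - c)) := by
  rcases eq_or_ne y 0 with rfl | hy
  · simp [arctanh, log_neg_eq_log]
  · rw [arctanh, ← log_div hp hm]
    congr 2
    field_simp

open Nat in
theorem iteratedDeriv_succ_arctanh_div {c x : ℝ} (hp : x + c ≠ 0) (hm : x - c ≠ 0) (n : ℕ) :
    iteratedDeriv (n + 1) (fun y => arctanh (c / y)) x =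
      (-1) ^ n * n ! / 2 * (1 / (x + c) ^ (n + 1) - 1 / (x - c) ^ (n + 1)) := by
  have hopen : IsOpen {y : ℝ | y + c ≠ 0 ∧ y - c ≠ 0} :=
    (isOpen_ne_fun (by fun_prop) (by fun_prop)).inter (isOpen_ne_fun (by fun_prop) (by fun_prop))
  have heq : (fun y => arctanh (c / y)) =ᶠ[nhds x] fun y => 1 / 2 * (log (y + c) - log (y - c)) := by
    filter_upwards [hopen.mem_nhds ⟨hp, hm⟩] with y hy
    exact arctanh_div_eq_log_sub hy.1 hy.2
  rw [heq.iteratedDeriv_eq, iteratedDeriv_const_mul_field,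
    iteratedDeriv_fun_sub (f := fun y => log (y + c)) (g := fun y => log (y - c))
      (ContDiffAt.log (by fun_prop) hp) (ContDiffAt.log (by fun_prop) hm),
    iteratedDeriv_comp_add_const, iteratedDeriv_comp_sub_const]
  simp only [Real.iteratedDeriv_succ_log]
  ring

theorem abs_arctanh_le_one {t : ℝ} (ht : |t| ≤ 3 / 4) : |arctanh t| ≤ 1 := by
  obtain ⟨hlo, hhi⟩ := abs_le.1 ht
  have h7 : (7 : ℝ) ≤ exp 2 := by
    have := exp_one_gt_d9
    rw [show (2 : ℝ) = 1 + 1 by norm_num, exp_add]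
    nlinarith
  have hpos : 0 < (1 + t) / (1 - t) := div_pos (by linarith) (by linarith)
  have hle : (1 + t) / (1 - t) ≤ exp 2 := by
    rw [div_le_iff₀ (by linarith)]; nlinarith [exp_pos 2]
  have hge : exp (-2) ≤ (1 + t) / (1 - t) := by
    rw [exp_neg, le_div_iff₀ (by linarith), inv_mul_le_iff₀ (exp_pos 2)]; nlinarith
  have hlog : |log ((1 + t) / (1 - t))| ≤ 2 :=
    abs_le.2 ⟨(le_log_iff_exp_le hpos).2 hge, (log_le_iff_le_exp hpos).2 hle⟩
  rw [arctanh, abs_mul, abs_of_pos (by norm_num : (0 : ℝ) < 1 / 2)]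
  linarith

theorem le_abs_add_of_add_abs_le {c d x : ℝ} (h : d + |c| ≤ |x|) : d ≤ |x + c| := by
  have := abs_sub_abs_le_abs_sub x (-c)
  rw [abs_neg, sub_neg_eq_add] at this
  linarith

theorem le_abs_sub_of_add_abs_le {c d x : ℝ} (h : d + |c| ≤ |x|) : d ≤ |x - c| := by
  linarith [abs_sub_abs_le_abs_sub x c]

open Nat in
theorem abs_iteratedDeriv_succ_arctanh_div_le {c d x : ℝ} (hd : 0 < d) (hx : d + |c| ≤ |x|)
    (n : ℕ) :
    |iteratedDeriv (n + 1) (fun y => arctanh (c / y)) x| ≤ n ! * (1 / d) ^ (n + 1) := by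
  have hp := le_abs_add_of_add_abs_le hx
  have hm := le_abs_sub_of_add_abs_le hx
  have hinv : ∀ a : ℝ, d ≤ |a| → |1 / a ^ (n + 1)| ≤ (1 / d) ^ (n + 1) := fun a ha => by
    rw [abs_div, abs_one, abs_pow, one_div_pow]
    gcongr
  rw [iteratedDeriv_succ_arctanh_div (abs_pos.1 (hd.trans_le hp)) (abs_pos.1 (hd.trans_le hm))]
  calc _ = n ! / 2 * |1 / (x + c) ^ (n + 1) - 1 / (x - c) ^ (n + 1)| := by
        rw [abs_mul, abs_div, abs_mul, abs_pow, abs_neg, abs_one, one_pow, one_mul, Nat.abs_cast,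
          abs_two]
    _ ≤ n ! / 2 * ((1 / d) ^ (n + 1) + (1 / d) ^ (n + 1)) := by
        gcongr
        exact (abs_sub _ _).trans (add_le_add (hinv _ hp) (hinv _ hm))
    _ = _ := by ring

theorem arctanh_derivative_bounds
    (K L v : ℝ) (hK : 0 < K) (hL : 0 < L) (hv0 : 0 ≤ v) (hv1 : v < 1)
    (m : ℕ) (ω : ℝ) (hω : Real.sqrt 2 * K / L ≤ |ω|) :
    |iteratedDeriv m (fun ω : ℝ => arctanh (K * v / (L * ω))) ω| ≤
      (6 * L / K) ^ m * (m.factorial : ℝ) := by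
  set c := K * v / L
  have hc : |c| < K / L := by
    rw [abs_of_nonneg (by positivity)]
    exact div_lt_div_of_pos_right (by nlinarith) hL
  have hωc : 4 / 3 * (K / L) ≤ |ω| := by
    refine le_trans ?_ hω
    rw [mul_div_assoc]
    gcongr
    exact le_sqrt_of_sq_le (by norm_num)
  rw [show (fun ω : ℝ => arctanh (K * v / (L * ω))) = fun y => arctanh (c / y) by
    funext y; rw [div_div]]
  cases m with
  | zero =>
    have hcω : |c / ω| ≤ 3 / 4 := by
      rw [abs_div, div_le_iff₀ (by linarith [abs_nonneg c])]
      linarith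
    simpa using abs_arctanh_le_one hcω
  | succ n =>
    calc _ ≤ n.factorial * (1 / (K / L / 3)) ^ (n + 1) :=
          abs_iteratedDeriv_succ_arctanh_div_le (by positivity) (by linarith) n
      _ = n.factorial * (3 * L / K) ^ (n + 1) := by field_simp
      _ ≤ (n + 1).factorial * (6 * L / K) ^ (n + 1) := by
          gcongr
          · omega
          · linarith
      _ = _ := mul_comm _ _
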